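/- Let ∇ be a torsion-free connection on a surface Σ with everywhere-nonzero skew-symmetric Ricci tensor ρ, and let 𝒦 = Ker L be the space of smooth 1-forms ξ with symmetrized covariant derivative zero (Killing 1-forms). Then dim 𝒦 ≤ 1, and every ξ ∈ 𝒦 is either identically zero or nonzero at every point of Σ. -/

import Mathlib

open scoped BigOperators

noncomputable section

/-- The surface, presented in a global (connected) coordinate chart. -/
abbrev Surf := Fin 2 → ℝ

/-- Partial derivative in coordinate direction `j`. -/
def pd (j : Fin 2) (f : Surf → ℝ) (x : Surf) : ℝ :=
  fderiv ℝ f x (Pi.single j 1)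

/-- The Ricci tensor of a connection with Christoffel symbols `Γ`
(`Γ x j k l` denotes `Γ^l_{jk}`):
`Ric_{sk} = ∂_l Γ^l_{ks} - ∂_k Γ^l_{ls} + Γ^l_{lp} Γ^p_{ks} - Γ^l_{kp} Γ^p_{ls}`. -/
def ricci (Γ : Surf → Fin 2 → Fin 2 → Fin 2 → ℝ) (x : Surf) (s k : Fin 2) : ℝ :=
  ∑ l, (pd l (fun y => Γ y k s l) x - pd k (fun y => Γ y l s l) x
    + ∑ p, Γ x l p l * Γ x k s p - ∑ p, Γ x k p l * Γ x l s p)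

/-- `ξ` is a (smooth) Killing 1-form for `Γ`: the symmetrized covariant
derivative of `ξ` vanishes. -/
def IsKillingForm (Γ : Surf → Fin 2 → Fin 2 → Fin 2 → ℝ)
    (ξ : Surf → Fin 2 → ℝ) : Prop :=
  (∀ k, ContDiff ℝ (⊤ : ℕ∞) fun x => ξ x k) ∧
  ∀ x j k, (pd j (fun y => ξ y k) x - ∑ s, Γ x j k s * ξ x s)
    + (pd k (fun y => ξ y j) x - ∑ s, Γ x k j s * ξ x s) = 0

/-! ### pd toolkit -/

lemma pd_smooth {g : Surf → ℝ} (hg : ContDiff ℝ (⊤ : ℕ∞) g) (j : Fin 2) :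
    ContDiff ℝ (⊤ : ℕ∞) (pd j g) :=
  (hg.fderiv_right (by simp)).clm_apply contDiff_const

lemma pd_congr {g h : Surf → ℝ} (e : ∀ y, g y = h y) (j : Fin 2) (x : Surf) :
    pd j g x = pd j h x := by rw [funext e]

lemma pd_add {g h : Surf → ℝ} (hg : ContDiff ℝ (⊤ : ℕ∞) g) (hh : ContDiff ℝ (⊤ : ℕ∞) h) (j x) :
    pd j (fun y => g y + h y) x = pd j g x + pd j h x := by
  unfold pd
  rw [fderiv_fun_add (hg.differentiable (by simp) x) (hh.differentiable (by simp) x)]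
  rfl

lemma pd_mul {g h : Surf → ℝ} (hg : ContDiff ℝ (⊤ : ℕ∞) g) (hh : ContDiff ℝ (⊤ : ℕ∞) h) (j x) :
    pd j (fun y => g y * h y) x = pd j g x * h x + g x * pd j h x := by
  unfold pd
  rw [fderiv_fun_mul (hg.differentiable (by simp) x) (hh.differentiable (by simp) x)]
  simp only [ContinuousLinearMap.add_apply, ContinuousLinearMap.coe_smul',
    Pi.smul_apply, smul_eq_mul]
  ring

lemma pd_neg {g : Surf → ℝ} (j x) :
    pd j (fun y => -(g y)) x = -(pd j g x) := by
  unfold pd; rw [fderiv_fun_neg]; rfl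

lemma pd_sub {g h : Surf → ℝ} (hg : ContDiff ℝ (⊤ : ℕ∞) g) (hh : ContDiff ℝ (⊤ : ℕ∞) h) (j x) :
    pd j (fun y => g y - h y) x = pd j g x - pd j h x := by
  unfold pd
  rw [fderiv_fun_sub (hg.differentiable (by simp) x) (hh.differentiable (by simp) x)]
  rfl

lemma pd_const (c : ℝ) (j x) : pd j (fun _ => c) x = 0 := by
  unfold pd; rw [fderiv_fun_const]; rfl

lemma pd_const_mul {g : Surf → ℝ} (hg : ContDiff ℝ (⊤ : ℕ∞) g) (c : ℝ) (j x) :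
    pd j (fun y => c * g y) x = c * pd j g x := by
  unfold pd
  rw [fderiv_const_mul (hg.differentiable (by simp) x)]
  rfl

lemma pd_comm {g : Surf → ℝ} (hg : ContDiff ℝ (⊤ : ℕ∞) g) (i j x) :
    pd i (pd j g) x = pd j (pd i g) x := by
  have hd : ∀ y, HasFDerivAt g (fderiv ℝ g y) y :=
    fun y => (hg.differentiable (by simp) y).hasFDerivAt
  have h2 : HasFDerivAt (fderiv ℝ g) (fderiv ℝ (fderiv ℝ g) x) x :=
    ((hg.fderiv_right (m := (⊤ : ℕ∞)) (by simp)).differentiable (by simp) x).hasFDerivAt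
  have hsymm := second_derivative_symmetric hd h2 (Pi.single i 1) (Pi.single j 1)
  have e : ∀ (a b : Fin 2), pd a (pd b g) x
      = fderiv ℝ (fderiv ℝ g) x (Pi.single a 1) (Pi.single b 1) := by
    intro a b
    unfold pd
    rw [fderiv_clm_apply ((hg.fderiv_right (m := (⊤ : ℕ∞)) (by simp)).differentiable (by simp) x)
      (differentiableAt_const _)]
    simp
  rw [e, e, hsymm]

/-- expansion: `a*b + c*d + k*v`. -/
lemma pd_exp3c {a b c d v : Surf → ℝ} (ha : ContDiff ℝ (⊤ : ℕ∞) a) (hb : ContDiff ℝ (⊤ : ℕ∞) b)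
    (hc : ContDiff ℝ (⊤ : ℕ∞) c) (hd : ContDiff ℝ (⊤ : ℕ∞) d) (hv : ContDiff ℝ (⊤ : ℕ∞) v) (k : ℝ) (j x) :
    pd j (fun y => a y * b y + c y * d y + k * v y) x
      = pd j a x * b x + a x * pd j b x + pd j c x * d x + c x * pd j d x
        + k * pd j v x := by
  rw [pd_add ((ha.mul hb).add (hc.mul hd)) (contDiff_const.mul hv),
    pd_add (ha.mul hb) (hc.mul hd), pd_mul ha hb, pd_mul hc hd, pd_const_mul hv]
  ring

/-- expansion: `a*b + c*d + u*v`. -/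
lemma pd_exp3f {a b c d u v : Surf → ℝ} (ha : ContDiff ℝ (⊤ : ℕ∞) a) (hb : ContDiff ℝ (⊤ : ℕ∞) b)
    (hc : ContDiff ℝ (⊤ : ℕ∞) c) (hd : ContDiff ℝ (⊤ : ℕ∞) d) (hu : ContDiff ℝ (⊤ : ℕ∞) u)
    (hv : ContDiff ℝ (⊤ : ℕ∞) v) (j x) :
    pd j (fun y => a y * b y + c y * d y + u y * v y) x
      = pd j a x * b x + a x * pd j b x + pd j c x * d x + c x * pd j d x
        + pd j u x * v x + u x * pd j v x := by
  rw [pd_add ((ha.mul hb).add (hc.mul hd)) (hu.mul hv),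
    pd_add (ha.mul hb) (hc.mul hd), pd_mul ha hb, pd_mul hc hd, pd_mul hu hv]
  ring

/-- expansion: `a*b + c*d`. -/
lemma pd_exp2f {a b c d : Surf → ℝ} (ha : ContDiff ℝ (⊤ : ℕ∞) a) (hb : ContDiff ℝ (⊤ : ℕ∞) b)
    (hc : ContDiff ℝ (⊤ : ℕ∞) c) (hd : ContDiff ℝ (⊤ : ℕ∞) d) (j x) :
    pd j (fun y => a y * b y + c y * d y) x
      = pd j a x * b x + a x * pd j b x + pd j c x * d x + c x * pd j d x := by
  rw [pd_add (ha.mul hb) (hc.mul hd), pd_mul ha hb, pd_mul hc hd]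
  ring

lemma fderiv_decomp {g : Surf → ℝ} (hg : DifferentiableAt ℝ g p) (w : Surf) :
    fderiv ℝ g p w = w 0 * pd 0 g p + w 1 * pd 1 g p := by
  have : w = w 0 • (Pi.single 0 1 : Surf) + w 1 • (Pi.single 1 1 : Surf) := by
    funext i
    fin_cases i <;> simp [Pi.single_apply]
  have h2 : fderiv ℝ g p w
      = fderiv ℝ g p (w 0 • (Pi.single 0 1 : Surf) + w 1 • (Pi.single 1 1 : Surf)) := by
    rw [← this]
  rw [h2]
  simp only [map_add, map_smul, smul_eq_mul]
  rfl

section Dev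
variable (Γ : Surf → Fin 2 → Fin 2 → Fin 2 → ℝ) (ξ : Surf → Fin 2 → ℝ)

/-- the rotation coefficient `f`, with `∇ξ = f ε`. -/
def kf : Surf → ℝ := fun x =>
  pd 0 (fun y => ξ y 1) x - (Γ x 0 1 0 * ξ x 0 + Γ x 0 1 1 * ξ x 1)

/-- `r = ric_{01}`. -/
def rc : Surf → ℝ := fun x => ricci Γ x 0 1

def AA : Surf → ℝ := fun y => pd 1 (rc Γ) y - rc Γ y * (Γ y 0 1 0 + Γ y 1 1 1)
def BB : Surf → ℝ := fun y => rc Γ y * (Γ y 0 0 0 + Γ y 0 1 1) - pd 0 (rc Γ) y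

variable {Γ ξ}
variable (hΓ : ∀ j k l, ContDiff ℝ (⊤ : ℕ∞) fun x => Γ x j k l)
  (htf : ∀ x j k l, Γ x j k l = Γ x k j l)
  (hskew : ∀ x j k, ricci Γ x j k = -ricci Γ x k j)
  (hξ : IsKillingForm Γ ξ)

section
include hΓ hξ
lemma hkfc : ContDiff ℝ (⊤ : ℕ∞) (kf Γ ξ) := by
  unfold kf
  exact (pd_smooth (hξ.1 1) 0).sub (((hΓ 0 1 0).mul (hξ.1 0)).add ((hΓ 0 1 1).mul (hξ.1 1)))
end

section
include htf
lemma rc_eq : ∀ x, rc Γ x =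
    pd 0 (fun y => Γ y 0 1 0) x - pd 1 (fun y => Γ y 0 0 0) x
      + (Γ x 0 1 0 * Γ x 0 1 1 - Γ x 1 1 0 * Γ x 0 0 1) := by
  intro x
  have hpdsym : ∀ (i c : Fin 2), pd i (fun y => Γ y 1 0 c) x = pd i (fun y => Γ y 0 1 c) x :=
    fun i c => pd_congr (fun y => htf y 1 0 c) i x
  simp only [rc, ricci, Fin.sum_univ_two, hpdsym, htf x 1 0 0, htf x 1 0 1]
  ring
end

section
include hΓ htf
lemma hrcc : ContDiff ℝ (⊤ : ℕ∞) (rc Γ) := by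
  have : rc Γ = fun x =>
      pd 0 (fun y => Γ y 0 1 0) x - pd 1 (fun y => Γ y 0 0 0) x
        + (Γ x 0 1 0 * Γ x 0 1 1 - Γ x 1 1 0 * Γ x 0 0 1) := funext (rc_eq htf)
  rw [this]
  exact ((pd_smooth (hΓ 0 1 0) 0).sub (pd_smooth (hΓ 0 0 0) 1)).add
    (((hΓ 0 1 0).mul (hΓ 0 1 1)).sub ((hΓ 1 1 0).mul (hΓ 0 0 1)))

lemma hAAc : ContDiff ℝ (⊤ : ℕ∞) (AA Γ) := by
  unfold AA
  exact (pd_smooth (hrcc hΓ htf) 1).sub ((hrcc hΓ htf).mul ((hΓ 0 1 0).add (hΓ 1 1 1)))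

lemma hBBc : ContDiff ℝ (⊤ : ℕ∞) (BB Γ) := by
  unfold BB
  exact ((hrcc hΓ htf).mul ((hΓ 0 0 0).add (hΓ 0 1 1))).sub (pd_smooth (hrcc hΓ htf) 0)
end

/-! ### the four components of `∇ξ` -/
section
include hξ

lemma F1_00 : ∀ y, pd 0 (fun z => ξ z 0) y
    = Γ y 0 0 0 * ξ y 0 + Γ y 0 0 1 * ξ y 1 + (0:ℝ) * kf Γ ξ y := by
  intro y
  have h := hξ.2 y 0 0
  simp only [Fin.sum_univ_two] at h
  linarith

lemma F1_01 : ∀ y, pd 0 (fun z => ξ z 1) y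
    = Γ y 0 1 0 * ξ y 0 + Γ y 0 1 1 * ξ y 1 + (1:ℝ) * kf Γ ξ y := by
  intro y
  simp only [kf]
  ring

lemma F1_11 : ∀ y, pd 1 (fun z => ξ z 1) y
    = Γ y 1 1 0 * ξ y 0 + Γ y 1 1 1 * ξ y 1 + (0:ℝ) * kf Γ ξ y := by
  intro y
  have h := hξ.2 y 1 1
  simp only [Fin.sum_univ_two] at h
  linarith

include htf
lemma F1_10 : ∀ y, pd 1 (fun z => ξ z 0) y
    = Γ y 0 1 0 * ξ y 0 + Γ y 0 1 1 * ξ y 1 + (-1:ℝ) * kf Γ ξ y := by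
  intro y
  have h := hξ.2 y 0 1
  simp only [Fin.sum_univ_two] at h
  rw [htf y 1 0 0, htf y 1 0 1] at h
  simp only [kf]
  linarith
end

/-! ### Ricci components in atomic form -/
section
include htf

lemma hr01 : ∀ x, pd 0 (fun y => Γ y 0 1 0) x - pd 1 (fun y => Γ y 0 0 0) x
    + (Γ x 0 1 0 * Γ x 0 1 1 - Γ x 1 1 0 * Γ x 0 0 1) = rc Γ x :=
  fun x => (rc_eq htf x).symm

include hskew

lemma hr10 : ∀ x, pd 1 (fun y => Γ y 0 1 1) x - pd 0 (fun y => Γ y 1 1 1) x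
    + (Γ x 0 1 0 * Γ x 0 1 1 - Γ x 1 1 0 * Γ x 0 0 1) = -(rc Γ x) := by
  intro x
  have h : ricci Γ x 1 0 = -(rc Γ x) := hskew x 1 0
  rw [← h]
  have hpdsym : ∀ (i c : Fin 2), pd i (fun y => Γ y 1 0 c) x = pd i (fun y => Γ y 0 1 c) x :=
    fun i c => pd_congr (fun y => htf y 1 0 c) i x
  simp only [ricci, Fin.sum_univ_two, hpdsym, htf x 1 0 0, htf x 1 0 1]
  ring

lemma hr00 : ∀ x, pd 1 (fun y => Γ y 0 0 1) x - pd 0 (fun y => Γ y 0 1 1) x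
    + (Γ x 0 1 1 * Γ x 0 0 0 + Γ x 1 1 1 * Γ x 0 0 1
        - Γ x 0 0 1 * Γ x 0 1 0 - Γ x 0 1 1 * Γ x 0 1 1) = 0 := by
  intro x
  have h : ricci Γ x 0 0 = 0 := by have := hskew x 0 0; linarith
  rw [← h]
  have hpdsym : ∀ (i c : Fin 2), pd i (fun y => Γ y 1 0 c) x = pd i (fun y => Γ y 0 1 c) x :=
    fun i c => pd_congr (fun y => htf y 1 0 c) i x
  simp only [ricci, Fin.sum_univ_two, hpdsym, htf x 1 0 0, htf x 1 0 1]
  ring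

lemma hr11 : ∀ x, pd 0 (fun y => Γ y 1 1 0) x - pd 1 (fun y => Γ y 0 1 0) x
    + (Γ x 0 0 0 * Γ x 1 1 0 + Γ x 0 1 0 * Γ x 1 1 1
        - Γ x 0 1 0 * Γ x 0 1 0 - Γ x 1 1 0 * Γ x 0 1 1) = 0 := by
  intro x
  have h : ricci Γ x 1 1 = 0 := by have := hskew x 1 1; linarith
  rw [← h]
  have hpdsym : ∀ (i c : Fin 2), pd i (fun y => Γ y 1 0 c) x = pd i (fun y => Γ y 0 1 c) x :=
    fun i c => pd_congr (fun y => htf y 1 0 c) i x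
  simp only [ricci, Fin.sum_univ_two, hpdsym, htf x 1 0 0, htf x 1 0 1]
  ring

end
set_option linter.unusedSectionVars false
section GEN
include hΓ htf hskew hξ
lemma F2_0 : ∀ x, pd 0 (kf Γ ξ) x = rc Γ x * ξ x 0 + kf Γ ξ x * Γ x 0 0 0 + kf Γ ξ x * Γ x 0 1 1 := by
  intro x
  have hfc : ContDiff ℝ (⊤ : ℕ∞) (kf Γ ξ) := hkfc (hΓ := hΓ) (hξ := hξ)
  have hrc' : ContDiff ℝ (⊤ : ℕ∞) (rc Γ) := hrcc (hΓ := hΓ) (htf := htf)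
  have a00 := F1_00 (hξ := hξ) x
  have a01 := F1_01 (hξ := hξ) x
  have a10 := F1_10 (htf := htf) (hξ := hξ) x
  have a11 := F1_11 (hξ := hξ) x
  have b01 := hr01 (htf := htf) x
  have b10 := hr10 (htf := htf) (hskew := hskew) x
  have b00 := hr00 (htf := htf) (hskew := hskew) x
  have b11 := hr11 (htf := htf) (hskew := hskew) x
  have hx : pd 0 (pd 1 (fun z => ξ z 0)) x = pd 1 (pd 0 (fun z => ξ z 0)) x := pd_comm (hξ.1 0) 0 1 x
  have hc1 : pd 0 (pd 1 (fun z => ξ z 0)) x = pd 0 (fun y => Γ y 0 1 0 * ξ y 0 + Γ y 0 1 1 * ξ y 1 + (-1:ℝ) * kf Γ ξ y) x :=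
    pd_congr (F1_10 (htf := htf) (hξ := hξ)) 0 x
  have he1 := pd_exp3c (hΓ 0 1 0) (hξ.1 0) (hΓ 0 1 1) (hξ.1 1) hfc (-1:ℝ) 0 x
  have hc2 : pd 1 (pd 0 (fun z => ξ z 0)) x = pd 1 (fun y => Γ y 0 0 0 * ξ y 0 + Γ y 0 0 1 * ξ y 1 + (0:ℝ) * kf Γ ξ y) x :=
    pd_congr (F1_00 (hξ := hξ)) 1 x
  have he2 := pd_exp3c (hΓ 0 0 0) (hξ.1 0) (hΓ 0 0 1) (hξ.1 1) hfc (0:ℝ) 1 x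
  linear_combination ((-1:ℝ)) * hx + ((1:ℝ)) * hc1 + ((1:ℝ)) * he1 + ((-1:ℝ)) * hc2 + ((-1:ℝ)) * he2 + ((1:ℝ) * Γ x 0 1 0) * a00 + ((1:ℝ) * Γ x 0 1 1) * a01 + ((-1:ℝ) * Γ x 0 0 0) * a10 + ((-1:ℝ) * Γ x 0 0 1) * a11 + ((1:ℝ) * ξ x 0) * b01 + ((-1:ℝ) * ξ x 1) * b00

lemma F2_1 : ∀ x, pd 1 (kf Γ ξ) x = rc Γ x * ξ x 1 + kf Γ ξ x * Γ x 0 1 0 + kf Γ ξ x * Γ x 1 1 1 := by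
  intro x
  have hfc : ContDiff ℝ (⊤ : ℕ∞) (kf Γ ξ) := hkfc (hΓ := hΓ) (hξ := hξ)
  have hrc' : ContDiff ℝ (⊤ : ℕ∞) (rc Γ) := hrcc (hΓ := hΓ) (htf := htf)
  have a00 := F1_00 (hξ := hξ) x
  have a01 := F1_01 (hξ := hξ) x
  have a10 := F1_10 (htf := htf) (hξ := hξ) x
  have a11 := F1_11 (hξ := hξ) x
  have b01 := hr01 (htf := htf) x
  have b10 := hr10 (htf := htf) (hskew := hskew) x
  have b00 := hr00 (htf := htf) (hskew := hskew) x
  have b11 := hr11 (htf := htf) (hskew := hskew) x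
  have hx : pd 0 (pd 1 (fun z => ξ z 1)) x = pd 1 (pd 0 (fun z => ξ z 1)) x := pd_comm (hξ.1 1) 0 1 x
  have hc1 : pd 0 (pd 1 (fun z => ξ z 1)) x = pd 0 (fun y => Γ y 1 1 0 * ξ y 0 + Γ y 1 1 1 * ξ y 1 + (0:ℝ) * kf Γ ξ y) x :=
    pd_congr (F1_11 (hξ := hξ)) 0 x
  have he1 := pd_exp3c (hΓ 1 1 0) (hξ.1 0) (hΓ 1 1 1) (hξ.1 1) hfc (0:ℝ) 0 x
  have hc2 : pd 1 (pd 0 (fun z => ξ z 1)) x = pd 1 (fun y => Γ y 0 1 0 * ξ y 0 + Γ y 0 1 1 * ξ y 1 + (1:ℝ) * kf Γ ξ y) x :=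
    pd_congr (F1_01 (hξ := hξ)) 1 x
  have he2 := pd_exp3c (hΓ 0 1 0) (hξ.1 0) (hΓ 0 1 1) (hξ.1 1) hfc (1:ℝ) 1 x
  linear_combination ((-1:ℝ)) * hx + ((1:ℝ)) * hc1 + ((1:ℝ)) * he1 + ((-1:ℝ)) * hc2 + ((-1:ℝ)) * he2 + ((1:ℝ) * Γ x 1 1 0) * a00 + ((1:ℝ) * Γ x 1 1 1) * a01 + ((-1:ℝ) * Γ x 0 1 0) * a10 + ((-1:ℝ) * Γ x 0 1 1) * a11 + ((-1:ℝ) * ξ x 1) * b10 + ((1:ℝ) * ξ x 0) * b11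

lemma F3 : ∀ x, 4 * (rc Γ x * kf Γ ξ x) = (pd 1 (rc Γ) x - rc Γ x * (Γ x 0 1 0 + Γ x 1 1 1)) * ξ x 0 + (rc Γ x * (Γ x 0 0 0 + Γ x 0 1 1) - pd 0 (rc Γ) x) * ξ x 1 := by
  intro x
  have hfc : ContDiff ℝ (⊤ : ℕ∞) (kf Γ ξ) := hkfc (hΓ := hΓ) (hξ := hξ)
  have hrc' : ContDiff ℝ (⊤ : ℕ∞) (rc Γ) := hrcc (hΓ := hΓ) (htf := htf)
  have a00 := F1_00 (hξ := hξ) x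
  have a01 := F1_01 (hξ := hξ) x
  have a10 := F1_10 (htf := htf) (hξ := hξ) x
  have a11 := F1_11 (hξ := hξ) x
  have b01 := hr01 (htf := htf) x
  have b10 := hr10 (htf := htf) (hskew := hskew) x
  have b00 := hr00 (htf := htf) (hskew := hskew) x
  have b11 := hr11 (htf := htf) (hskew := hskew) x
  have c0 := F2_0 (hΓ := hΓ) (htf := htf) (hskew := hskew) (hξ := hξ) x
  have c1 := F2_1 (hΓ := hΓ) (htf := htf) (hskew := hskew) (hξ := hξ) x
  have hx : pd 0 (pd 1 (kf Γ ξ)) x = pd 1 (pd 0 (kf Γ ξ)) x := pd_comm hfc 0 1 x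
  have hc1 : pd 0 (pd 1 (kf Γ ξ)) x = pd 0 (fun y => rc Γ y * ξ y 1 + kf Γ ξ y * Γ y 0 1 0 + kf Γ ξ y * Γ y 1 1 1) x :=
    pd_congr (F2_1 (hΓ := hΓ) (htf := htf) (hskew := hskew) (hξ := hξ)) 0 x
  have he1 := pd_exp3f hrc' (hξ.1 1) hfc (hΓ 0 1 0) hfc (hΓ 1 1 1) 0 x
  have hc2 : pd 1 (pd 0 (kf Γ ξ)) x = pd 1 (fun y => rc Γ y * ξ y 0 + kf Γ ξ y * Γ y 0 0 0 + kf Γ ξ y * Γ y 0 1 1) x :=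
    pd_congr (F2_0 (hΓ := hΓ) (htf := htf) (hskew := hskew) (hξ := hξ)) 1 x
  have he2 := pd_exp3f hrc' (hξ.1 0) hfc (hΓ 0 0 0) hfc (hΓ 0 1 1) 1 x
  linear_combination ((1:ℝ)) * hx + ((-1:ℝ)) * hc1 + ((-1:ℝ)) * he1 + ((1:ℝ)) * hc2 + ((1:ℝ)) * he2 + ((-1:ℝ) * rc Γ x) * a01 + ((1:ℝ) * rc Γ x) * a10 + ((-1:ℝ) * Γ x 0 1 0 + (-1:ℝ) * Γ x 1 1 1) * c0 + ((1:ℝ) * Γ x 0 0 0 + (1:ℝ) * Γ x 0 1 1) * c1 + ((-1:ℝ) * kf Γ ξ x) * b01 + ((1:ℝ) * kf Γ ξ x) * b10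

def N00 (Γ : Surf → Fin 2 → Fin 2 → Fin 2 → ℝ) : Surf → ℝ := fun x => (-3:ℝ) * Γ x 0 0 0 * Γ x 0 1 0 * rc Γ x * rc Γ x + (1:ℝ) * Γ x 0 0 0 * Γ x 1 1 1 * rc Γ x * rc Γ x + (-1:ℝ) * Γ x 0 0 0 * pd 1 (rc Γ) x * rc Γ x + (-7:ℝ) * Γ x 0 1 0 * Γ x 0 1 1 * rc Γ x * rc Γ x + (3:ℝ) * Γ x 0 1 0 * pd 0 (rc Γ) x * rc Γ x + (-3:ℝ) * Γ x 0 1 1 * Γ x 1 1 1 * rc Γ x * rc Γ x + (3:ℝ) * Γ x 0 1 1 * pd 1 (rc Γ) x * rc Γ x + (-1:ℝ) * Γ x 1 1 1 * pd 0 (rc Γ) x * rc Γ x + (4:ℝ) * pd 1 (fun y => Γ y 0 0 0) x * rc Γ x * rc Γ x + (4:ℝ) * pd 1 (fun y => Γ y 0 1 1) x * rc Γ x * rc Γ x + (-4:ℝ) * pd 0 (pd 1 (rc Γ)) x * rc Γ x + (5:ℝ) * pd 0 (rc Γ) x * pd 1 (rc Γ) x + (24:ℝ) * rc Γ x * rc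 Γ x * rc Γ x
def N01 (Γ : Surf → Fin 2 → Fin 2 → Fin 2 → ℝ) : Surf → ℝ := fun x => (3:ℝ) * Γ x 0 0 0 * Γ x 0 0 0 * rc Γ x * rc Γ x + (2:ℝ) * Γ x 0 0 0 * Γ x 0 1 1 * rc Γ x * rc Γ x + (-2:ℝ) * Γ x 0 0 0 * pd 0 (rc Γ) x * rc Γ x + (4:ℝ) * Γ x 0 1 0 * Γ x 0 0 1 * rc Γ x * rc Γ x + (4:ℝ) * Γ x 0 0 1 * Γ x 1 1 1 * rc Γ x * rc Γ x + (-4:ℝ) * Γ x 0 0 1 * pd 1 (rc Γ) x * rc Γ x + (-1:ℝ) * Γ x 0 1 1 * Γ x 0 1 1 * rc Γ x * rc Γ x + (2:ℝ) * Γ x 0 1 1 * pd 0 (rc Γ) x * rc Γ x + (-4:ℝ) * pd 0 (fun y => Γ y 0 0 0) x * rc Γ x * rc Γ x + (-4:ℝ) * pd 0 (fun y => Γ y 0 1 1) x * rc Γ x * rc Γ x + (4:ℝ) * pd 0 (pd 0 (rc Γ)) x * rc Γ x + (-5:ℝ) * pd 0 (rc Γ) x * pd 0 (rc Γ) x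
def N10 (Γ : Surf → Fin 2 → Fin 2 → Fin 2 → ℝ) : Surf → ℝ := fun x => (-4:ℝ) * Γ x 0 0 0 * Γ x 1 1 0 * rc Γ x * rc Γ x + (1:ℝ) * Γ x 0 1 0 * Γ x 0 1 0 * rc Γ x * rc Γ x + (-2:ℝ) * Γ x 0 1 0 * Γ x 1 1 1 * rc Γ x * rc Γ x + (-2:ℝ) * Γ x 0 1 0 * pd 1 (rc Γ) x * rc Γ x + (-4:ℝ) * Γ x 1 1 0 * Γ x 0 1 1 * rc Γ x * rc Γ x + (4:ℝ) * Γ x 1 1 0 * pd 0 (rc Γ) x * rc Γ x + (-3:ℝ) * Γ x 1 1 1 * Γ x 1 1 1 * rc Γ x * rc Γ x + (2:ℝ) * Γ x 1 1 1 * pd 1 (rc Γ) x * rc Γ x + (4:ℝ) * pd 1 (fun y => Γ y 0 1 0) x * rc Γ x * rc Γ x + (4:ℝ) * pd 1 (fun y => Γ y 1 1 1) x * rc Γ x * rc Γ x + (-4:ℝ) * pd 1 (pd 1 (rc Γ)) x * rc Γ x + (5:ℝ) * pd 1 (rc Γ) x * pd 1 (rc Γ) x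
def N11 (Γ : Surf → Fin 2 → Fin 2 → Fin 2 → ℝ) : Surf → ℝ := fun x => (3:ℝ) * Γ x 0 0 0 * Γ x 0 1 0 * rc Γ x * rc Γ x + (-1:ℝ) * Γ x 0 0 0 * Γ x 1 1 1 * rc Γ x * rc Γ x + (1:ℝ) * Γ x 0 0 0 * pd 1 (rc Γ) x * rc Γ x + (7:ℝ) * Γ x 0 1 0 * Γ x 0 1 1 * rc Γ x * rc Γ x + (-3:ℝ) * Γ x 0 1 0 * pd 0 (rc Γ) x * rc Γ x + (3:ℝ) * Γ x 0 1 1 * Γ x 1 1 1 * rc Γ x * rc Γ x + (-3:ℝ) * Γ x 0 1 1 * pd 1 (rc Γ) x * rc Γ x + (1:ℝ) * Γ x 1 1 1 * pd 0 (rc Γ) x * rc Γ x + (-4:ℝ) * pd 1 (fun y => Γ y 0 0 0) x * rc Γ x * rc Γ x + (-4:ℝ) * pd 1 (fun y => Γ y 0 1 1) x * rc Γ x * rc Γ x + (4:ℝ) * pd 0 (pd 1 (rc Γ)) x * rc Γ x + (-5:ℝ) * pd 0 (rc Γ) x * pd 1 (rc Γ) x + (16:ℝ) * rc Γ x * rc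 Γ x * rc Γ x

lemma Ntrace : ∀ x, N00 Γ x + N11 Γ x = 40 * (rc Γ x * rc Γ x * rc Γ x) := by
  intro x; simp only [N00, N11]; ring

lemma Nrow_0 : ∀ x, N00 Γ x * ξ x 0 + N01 Γ x * ξ x 1 = 0 := by
  intro x
  have hfc : ContDiff ℝ (⊤ : ℕ∞) (kf Γ ξ) := hkfc (hΓ := hΓ) (hξ := hξ)
  have hrc' : ContDiff ℝ (⊤ : ℕ∞) (rc Γ) := hrcc (hΓ := hΓ) (htf := htf)
  have a00 := F1_00 (hξ := hξ) x
  have a01 := F1_01 (hξ := hξ) x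
  have a10 := F1_10 (htf := htf) (hξ := hξ) x
  have a11 := F1_11 (hξ := hξ) x
  have b01 := hr01 (htf := htf) x
  have b10 := hr10 (htf := htf) (hskew := hskew) x
  have b00 := hr00 (htf := htf) (hskew := hskew) x
  have b11 := hr11 (htf := htf) (hskew := hskew) x
  have c0 := F2_0 (hΓ := hΓ) (htf := htf) (hskew := hskew) (hξ := hξ) x
  have c1 := F2_1 (hΓ := hΓ) (htf := htf) (hskew := hskew) (hξ := hξ) x
  have hx : pd 0 (fun y => 4 * (rc Γ y * kf Γ ξ y)) x = pd 0 (fun y => (pd 1 (rc Γ) y - rc Γ y * (Γ y 0 1 0 + Γ y 1 1 1)) * ξ y 0 + (rc Γ y * (Γ y 0 0 0 + Γ y 0 1 1) - pd 0 (rc Γ) y) * ξ y 1) x :=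
    pd_congr (F3 (hΓ := hΓ) (htf := htf) (hskew := hskew) (hξ := hξ)) 0 x
  have hL1 : pd 0 (fun y => 4 * (rc Γ y * kf Γ ξ y)) x = 4 * pd 0 (fun y => rc Γ y * kf Γ ξ y) x := pd_const_mul (hrc'.mul hfc) 4 0 x
  have hL2 : pd 0 (fun y => rc Γ y * kf Γ ξ y) x = pd 0 (rc Γ) x * kf Γ ξ x + rc Γ x * pd 0 (kf Γ ξ) x := pd_mul hrc' hfc 0 x
  have hAAl : ContDiff ℝ (⊤ : ℕ∞) (fun y => pd 1 (rc Γ) y - rc Γ y * (Γ y 0 1 0 + Γ y 1 1 1)) := (pd_smooth hrc' 1).sub (hrc'.mul ((hΓ 0 1 0).add (hΓ 1 1 1)))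
  have hBBl : ContDiff ℝ (⊤ : ℕ∞) (fun y => rc Γ y * (Γ y 0 0 0 + Γ y 0 1 1) - pd 0 (rc Γ) y) := (hrcc (hΓ := hΓ) (htf := htf)).mul ((hΓ 0 0 0).add (hΓ 0 1 1)) |>.sub (pd_smooth hrc' 0)
  have hR1 : pd 0 (fun y => (pd 1 (rc Γ) y - rc Γ y * (Γ y 0 1 0 + Γ y 1 1 1)) * ξ y 0 + (rc Γ y * (Γ y 0 0 0 + Γ y 0 1 1) - pd 0 (rc Γ) y) * ξ y 1) x = pd 0 (fun y => pd 1 (rc Γ) y - rc Γ y * (Γ y 0 1 0 + Γ y 1 1 1)) x * ξ x 0 + (pd 1 (rc Γ) x - rc Γ x * (Γ x 0 1 0 + Γ x 1 1 1)) * pd 0 (fun z => ξ z 0) x + pd 0 (fun y => rc Γ y * (Γ y 0 0 0 + Γ y 0 1 1) - pd 0 (rc Γ) y) x * ξ x 1 + (rc Γ x * (Γ x 0 0 0 + Γ x 0 1 1) - pd 0 (rc Γ) x) * pd 0 (fun z => ξ z 1) x :=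
    pd_exp2f hAAl (hξ.1 0) hBBl (hξ.1 1) 0 x
  have hR2 : pd 0 (fun y => pd 1 (rc Γ) y - rc Γ y * (Γ y 0 1 0 + Γ y 1 1 1)) x = pd 0 (pd 1 (rc Γ)) x - (pd 0 (rc Γ) x * (Γ x 0 1 0 + Γ x 1 1 1) + rc Γ x * (pd 0 (fun y => Γ y 0 1 0) x + pd 0 (fun y => Γ y 1 1 1) x)) := by
    rw [pd_sub (pd_smooth hrc' 1) (hrc'.mul ((hΓ 0 1 0).add (hΓ 1 1 1))) 0 x,
      pd_mul hrc' ((hΓ 0 1 0).add (hΓ 1 1 1)) 0 x, pd_add (hΓ 0 1 0) (hΓ 1 1 1) 0 x]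
  have hR3 : pd 0 (fun y => rc Γ y * (Γ y 0 0 0 + Γ y 0 1 1) - pd 0 (rc Γ) y) x = pd 0 (rc Γ) x * (Γ x 0 0 0 + Γ x 0 1 1) + rc Γ x * (pd 0 (fun y => Γ y 0 0 0) x + pd 0 (fun y => Γ y 0 1 1) x) - pd 0 (pd 0 (rc Γ)) x := by
    rw [pd_sub (hrc'.mul ((hΓ 0 0 0).add (hΓ 0 1 1))) (pd_smooth hrc' 0) 0 x,
      pd_mul hrc' ((hΓ 0 0 0).add (hΓ 0 1 1)) 0 x, pd_add (hΓ 0 0 0) (hΓ 0 1 1) 0 x]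
  have hcr : pd 1 (pd 0 (rc Γ)) x = pd 0 (pd 1 (rc Γ)) x := pd_comm hrc' 1 0 x
  have dd := F3 (hΓ := hΓ) (htf := htf) (hskew := hskew) (hξ := hξ) x
  simp only [N00, N01]
  linear_combination ((4:ℝ) * rc Γ x) * hx + ((-4:ℝ) * rc Γ x) * hL1 + ((-16:ℝ) * rc Γ x) * hL2 + ((4:ℝ) * rc Γ x) * hR1 + ((4:ℝ) * rc Γ x * ξ x 0) * hR2 + ((4:ℝ) * rc Γ x * ξ x 1) * hR3 + ((-4:ℝ) * Γ x 0 1 0 * rc Γ x * rc Γ x + (-4:ℝ) * Γ x 1 1 1 * rc Γ x * rc Γ x + (4:ℝ) * pd 1 (rc Γ) x * rc Γ x) * a00 + ((4:ℝ) * Γ x 0 0 0 * rc Γ x * rc Γ x + (4:ℝ) * Γ x 0 1 1 * rc Γ x * rc Γ x + (-4:ℝ) * pd 0 (rc Γ) x * rc Γ x) * a01 + ((-16:ℝ) * rc Γ x * rc Γ x) * c0 + ((-4:ℝ) * rc Γ x * rc Γ x * ξ x 0) * b01 + ((4:ℝ) * rc Γ x * rc Γ x * ξ x 0) * b10 + ((-3:ℝ)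 * Γ x 0 0 0 * rc Γ x + (-3:ℝ) * Γ x 0 1 1 * rc Γ x + (-5:ℝ) * pd 0 (rc Γ) x) * dd

lemma Nrow_1 : ∀ x, N10 Γ x * ξ x 0 + N11 Γ x * ξ x 1 = 0 := by
  intro x
  have hfc : ContDiff ℝ (⊤ : ℕ∞) (kf Γ ξ) := hkfc (hΓ := hΓ) (hξ := hξ)
  have hrc' : ContDiff ℝ (⊤ : ℕ∞) (rc Γ) := hrcc (hΓ := hΓ) (htf := htf)
  have a00 := F1_00 (hξ := hξ) x
  have a01 := F1_01 (hξ := hξ) x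
  have a10 := F1_10 (htf := htf) (hξ := hξ) x
  have a11 := F1_11 (hξ := hξ) x
  have b01 := hr01 (htf := htf) x
  have b10 := hr10 (htf := htf) (hskew := hskew) x
  have b00 := hr00 (htf := htf) (hskew := hskew) x
  have b11 := hr11 (htf := htf) (hskew := hskew) x
  have c0 := F2_0 (hΓ := hΓ) (htf := htf) (hskew := hskew) (hξ := hξ) x
  have c1 := F2_1 (hΓ := hΓ) (htf := htf) (hskew := hskew) (hξ := hξ) x
  have hx : pd 1 (fun y => 4 * (rc Γ y * kf Γ ξ y)) x = pd 1 (fun y => (pd 1 (rc Γ) y - rc Γ y * (Γ y 0 1 0 + Γ y 1 1 1)) * ξ y 0 + (rc Γ y * (Γ y 0 0 0 + Γ y 0 1 1) - pd 0 (rc Γ) y) * ξ y 1) x :=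
    pd_congr (F3 (hΓ := hΓ) (htf := htf) (hskew := hskew) (hξ := hξ)) 1 x
  have hL1 : pd 1 (fun y => 4 * (rc Γ y * kf Γ ξ y)) x = 4 * pd 1 (fun y => rc Γ y * kf Γ ξ y) x := pd_const_mul (hrc'.mul hfc) 4 1 x
  have hL2 : pd 1 (fun y => rc Γ y * kf Γ ξ y) x = pd 1 (rc Γ) x * kf Γ ξ x + rc Γ x * pd 1 (kf Γ ξ) x := pd_mul hrc' hfc 1 x
  have hAAl : ContDiff ℝ (⊤ : ℕ∞) (fun y => pd 1 (rc Γ) y - rc Γ y * (Γ y 0 1 0 + Γ y 1 1 1)) := (pd_smooth hrc' 1).sub (hrc'.mul ((hΓ 0 1 0).add (hΓ 1 1 1)))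
  have hBBl : ContDiff ℝ (⊤ : ℕ∞) (fun y => rc Γ y * (Γ y 0 0 0 + Γ y 0 1 1) - pd 0 (rc Γ) y) := (hrcc (hΓ := hΓ) (htf := htf)).mul ((hΓ 0 0 0).add (hΓ 0 1 1)) |>.sub (pd_smooth hrc' 0)
  have hR1 : pd 1 (fun y => (pd 1 (rc Γ) y - rc Γ y * (Γ y 0 1 0 + Γ y 1 1 1)) * ξ y 0 + (rc Γ y * (Γ y 0 0 0 + Γ y 0 1 1) - pd 0 (rc Γ) y) * ξ y 1) x = pd 1 (fun y => pd 1 (rc Γ) y - rc Γ y * (Γ y 0 1 0 + Γ y 1 1 1)) x * ξ x 0 + (pd 1 (rc Γ) x - rc Γ x * (Γ x 0 1 0 + Γ x 1 1 1)) * pd 1 (fun z => ξ z 0) x + pd 1 (fun y => rc Γ y * (Γ y 0 0 0 + Γ y 0 1 1) - pd 0 (rc Γ) y) x * ξ x 1 + (rc Γ x * (Γ x 0 0 0 + Γ x 0 1 1) - pd 0 (rc Γ) x) * pd 1 (fun z => ξ z 1) x :=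
    pd_exp2f hAAl (hξ.1 0) hBBl (hξ.1 1) 1 x
  have hR2 : pd 1 (fun y => pd 1 (rc Γ) y - rc Γ y * (Γ y 0 1 0 + Γ y 1 1 1)) x = pd 1 (pd 1 (rc Γ)) x - (pd 1 (rc Γ) x * (Γ x 0 1 0 + Γ x 1 1 1) + rc Γ x * (pd 1 (fun y => Γ y 0 1 0) x + pd 1 (fun y => Γ y 1 1 1) x)) := by
    rw [pd_sub (pd_smooth hrc' 1) (hrc'.mul ((hΓ 0 1 0).add (hΓ 1 1 1))) 1 x,
      pd_mul hrc' ((hΓ 0 1 0).add (hΓ 1 1 1)) 1 x, pd_add (hΓ 0 1 0) (hΓ 1 1 1) 1 x]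
  have hR3 : pd 1 (fun y => rc Γ y * (Γ y 0 0 0 + Γ y 0 1 1) - pd 0 (rc Γ) y) x = pd 1 (rc Γ) x * (Γ x 0 0 0 + Γ x 0 1 1) + rc Γ x * (pd 1 (fun y => Γ y 0 0 0) x + pd 1 (fun y => Γ y 0 1 1) x) - pd 1 (pd 0 (rc Γ)) x := by
    rw [pd_sub (hrc'.mul ((hΓ 0 0 0).add (hΓ 0 1 1))) (pd_smooth hrc' 0) 1 x,
      pd_mul hrc' ((hΓ 0 0 0).add (hΓ 0 1 1)) 1 x, pd_add (hΓ 0 0 0) (hΓ 0 1 1) 1 x]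
  have hcr : pd 1 (pd 0 (rc Γ)) x = pd 0 (pd 1 (rc Γ)) x := pd_comm hrc' 1 0 x
  have dd := F3 (hΓ := hΓ) (htf := htf) (hskew := hskew) (hξ := hξ) x
  simp only [N10, N11]
  linear_combination ((4:ℝ) * rc Γ x) * hx + ((-4:ℝ) * rc Γ x) * hL1 + ((-16:ℝ) * rc Γ x) * hL2 + ((4:ℝ) * rc Γ x) * hR1 + ((4:ℝ) * rc Γ x * ξ x 0) * hR2 + ((4:ℝ) * rc Γ x * ξ x 1) * hR3 + ((-4:ℝ) * rc Γ x * ξ x 1) * hcr + ((-4:ℝ) * Γ x 0 1 0 * rc Γ x * rc Γ x + (-4:ℝ) * Γ x 1 1 1 * rc Γ x * rc Γ x + (4:ℝ) * pd 1 (rc Γ) x * rc Γ x) * a10 + ((4:ℝ) * Γ x 0 0 0 * rc Γ x * rc Γ x + (4:ℝ) * Γ x 0 1 1 * rc Γ x * rc Γ x + (-4:ℝ) * pd 0 (rc Γ) x * rc Γ x) * a11 + ((-16:ℝ) * rc Γ x * rc Γ x) * c1 + ((-3:ℝ) * Γ x 0 1 0 * rc Γ x + (-3:ℝ) * Γ x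 1 1 1 * rc Γ x + (-5:ℝ) * pd 1 (rc Γ) x) * dd


end GEN
end Dev

/-! ### everywhere nonvanishing of r, and linear algebra -/

lemma rc_ne {Γ : Surf → Fin 2 → Fin 2 → Fin 2 → ℝ}
    (hskew : ∀ x j k, ricci Γ x j k = -ricci Γ x k j)
    (hnz : ∀ x, ∃ j k, ricci Γ x j k ≠ 0) : ∀ x, rc Γ x ≠ 0 := by
  intro x hr
  obtain ⟨j, k, h⟩ := hnz x
  have h00 : ricci Γ x 0 0 = 0 := by have := hskew x 0 0; linarith
  have h11 : ricci Γ x 1 1 = 0 := by have := hskew x 1 1; linarith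
  have h10 : ricci Γ x 1 0 = -ricci Γ x 0 1 := hskew x 1 0
  have h01 : ricci Γ x 0 1 = 0 := hr
  apply h
  fin_cases j <;> fin_cases k
  exacts [show ricci Γ x 0 0 = 0 from h00, show ricci Γ x 0 1 = 0 from h01,
    show ricci Γ x 1 0 = 0 by rw [h10, h01]; ring, show ricci Γ x 1 1 = 0 from h11]

lemma dep2 {q00 q01 q10 q11 v0 v1 w0 w1 : ℝ} (hq : q00 + q11 ≠ 0)
    (hv0 : q00*v0 + q01*v1 = 0) (hv1 : q10*v0 + q11*v1 = 0)
    (hw0 : q00*w0 + q01*w1 = 0) (hw1 : q10*w0 + q11*w1 = 0) :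
    ∃ a b : ℝ, (a ≠ 0 ∨ b ≠ 0) ∧ a*v0 + b*w0 = 0 ∧ a*v1 + b*w1 = 0 := by
  have h1 : q00 * (v0*w1 - v1*w0) = 0 := by linear_combination w1 * hv0 - v1 * hw0
  have h2 : q11 * (v0*w1 - v1*w0) = 0 := by linear_combination v0 * hw1 - w0 * hv1
  have h3 : (q00 + q11) * (v0*w1 - v1*w0) = 0 := by linear_combination h1 + h2
  have hd : v0*w1 - v1*w0 = 0 := (mul_eq_zero.1 h3).resolve_left hq
  by_cases hv : v0 = 0 ∧ v1 = 0
  · exact ⟨1, 0, Or.inl one_ne_zero, by simp [hv.1], by simp [hv.2]⟩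
  · rcases not_and_or.1 hv with h | h
    · exact ⟨w0, -v0, Or.inr (neg_ne_zero.2 h), by ring, by linear_combination -hd⟩
    · exact ⟨w1, -v1, Or.inr (neg_ne_zero.2 h), by linear_combination hd, by ring⟩

lemma absbound {a1 a2 a3 u1 u2 u3 n : ℝ} (h1 : |u1| ≤ n) (h2 : |u2| ≤ n) (h3 : |u3| ≤ n) :
    |a1*u1 + a2*u2 + a3*u3| ≤ (|a1|+|a2|+|a3|) * n := by
  calc |a1*u1 + a2*u2 + a3*u3| ≤ |a1*u1| + |a2*u2| + |a3*u3| := abs_add_three _ _ _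
  _ = |a1| * |u1| + |a2| * |u2| + |a3| * |u3| := by rw [abs_mul, abs_mul, abs_mul]
  _ ≤ |a1| * n + |a2| * n + |a3| * n :=
      add_le_add (add_le_add (mul_le_mul_of_nonneg_left h1 (abs_nonneg _))
        (mul_le_mul_of_nonneg_left h2 (abs_nonneg _))) (mul_le_mul_of_nonneg_left h3 (abs_nonneg _))
  _ = (|a1| + |a2| + |a3|) * n := by ring

/-! ### linear combinations of Killing forms -/

lemma killing_comb {Γ : Surf → Fin 2 → Fin 2 → Fin 2 → ℝ} {ξ η : Surf → Fin 2 → ℝ}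
    (hξ : IsKillingForm Γ ξ) (hη : IsKillingForm Γ η) (a b : ℝ) :
    IsKillingForm Γ (fun x k => a * ξ x k + b * η x k) := by
  constructor
  · exact fun k => (contDiff_const.mul (hξ.1 k)).add (contDiff_const.mul (hη.1 k))
  · intro x j k
    have hpd : ∀ (jj kk : Fin 2), pd jj (fun y => a * ξ y kk + b * η y kk) x
        = a * pd jj (fun y => ξ y kk) x + b * pd jj (fun y => η y kk) x := by
      intro jj kk
      rw [pd_add (contDiff_const.mul (hξ.1 kk)) (contDiff_const.mul (hη.1 kk)) jj x,
        pd_const_mul (hξ.1 kk) a jj x, pd_const_mul (hη.1 kk) b jj x]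
    have h1 := hξ.2 x j k
    have h2 := hη.2 x j k
    simp only [Fin.sum_univ_two] at h1 h2 ⊢
    rw [hpd j k, hpd k j]
    linear_combination a * h1 + b * h2

/-! ### unique continuation: a Killing form vanishing at a point vanishes identically -/

lemma killing_vanish {Γ : Surf → Fin 2 → Fin 2 → Fin 2 → ℝ} {ξ : Surf → Fin 2 → ℝ}
    (hΓ : ∀ j k l, ContDiff ℝ (⊤ : ℕ∞) fun x => Γ x j k l)
    (htf : ∀ x j k l, Γ x j k l = Γ x k j l)
    (hskew : ∀ x j k, ricci Γ x j k = -ricci Γ x k j)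
    (hnz : ∀ x, ∃ j k, ricci Γ x j k ≠ 0)
    (hξ : IsKillingForm Γ ξ) (x₀ : Surf)
    (h0 : ξ x₀ 0 = 0) (h1 : ξ x₀ 1 = 0) : ∀ z k, ξ z k = 0 := by
  have hfc : ContDiff ℝ (⊤ : ℕ∞) (kf Γ ξ) := hkfc (hΓ := hΓ) (hξ := hξ)
  have hrc' : ContDiff ℝ (⊤ : ℕ∞) (rc Γ) := hrcc (hΓ := hΓ) (htf := htf)
  have hf0 : kf Γ ξ x₀ = 0 := by
    have h3 := F3 (hΓ := hΓ) (htf := htf) (hskew := hskew) (hξ := hξ) x₀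
    rw [h0, h1] at h3
    have h4 : rc Γ x₀ * kf Γ ξ x₀ = 0 := by linarith
    exact (mul_eq_zero.1 h4).resolve_left (rc_ne hskew hnz x₀)
  intro z k
  set w : Surf := fun i => z i - x₀ i with hw
  set γ : ℝ → Surf := fun t => x₀ + t • w with hγdef
  have hγc : Continuous γ := continuous_const.add (continuous_id.smul continuous_const)
  have hγ0 : γ 0 = x₀ := by simp [hγdef]
  have hγ1 : γ 1 = z := by funext i; simp [hγdef, hw]
  have hγd : ∀ t, HasDerivAt γ w t := by
    intro t
    have h := ((hasDerivAt_id t).smul_const w).const_add x₀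
    simp only [id, one_smul] at h
    exact h
  have hcomp : ∀ (g : Surf → ℝ), ContDiff ℝ (⊤ : ℕ∞) g → ∀ t,
      HasDerivAt (fun s => g (γ s)) (w 0 * pd 0 g (γ t) + w 1 * pd 1 g (γ t)) t := by
    intro g hg t
    have hfd : HasFDerivAt g (fderiv ℝ g (γ t)) (γ t) :=
      (hg.differentiable (by simp) (γ t)).hasFDerivAt
    have h2 := hfd.comp_hasDerivAt t (hγd t)
    rwa [fderiv_decomp (hg.differentiable (by simp) (γ t)) w] at h2
  set u : ℝ → Fin 3 → ℝ := fun t => ![ξ (γ t) 0, ξ (γ t) 1, kf Γ ξ (γ t)] with hu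
  set V : ℝ → Fin 3 → ℝ := fun t => ![
    w 0 * (Γ (γ t) 0 0 0 * ξ (γ t) 0 + Γ (γ t) 0 0 1 * ξ (γ t) 1 + (0:ℝ) * kf Γ ξ (γ t))
      + w 1 * (Γ (γ t) 0 1 0 * ξ (γ t) 0 + Γ (γ t) 0 1 1 * ξ (γ t) 1 + (-1:ℝ) * kf Γ ξ (γ t)),
    w 0 * (Γ (γ t) 0 1 0 * ξ (γ t) 0 + Γ (γ t) 0 1 1 * ξ (γ t) 1 + (1:ℝ) * kf Γ ξ (γ t))
      + w 1 * (Γ (γ t) 1 1 0 * ξ (γ t) 0 + Γ (γ t) 1 1 1 * ξ (γ t) 1 + (0:ℝ) * kf Γ ξ (γ t)),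
    w 0 * (rc Γ (γ t) * ξ (γ t) 0 + kf Γ ξ (γ t) * Γ (γ t) 0 0 0 + kf Γ ξ (γ t) * Γ (γ t) 0 1 1)
      + w 1 * (rc Γ (γ t) * ξ (γ t) 1 + kf Γ ξ (γ t) * Γ (γ t) 0 1 0 + kf Γ ξ (γ t) * Γ (γ t) 1 1 1)]
    with hV
  have hud : ∀ t, HasDerivAt u (V t) t := by
    intro t
    apply hasDerivAt_pi.2
    intro i
    fin_cases i
    · have h := hcomp (fun y => ξ y 0) (hξ.1 0) t
      rw [F1_00 (hξ := hξ) (γ t), F1_10 (htf := htf) (hξ := hξ) (γ t)] at h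
      simpa [hu, hV] using h
    · have h := hcomp (fun y => ξ y 1) (hξ.1 1) t
      rw [F1_01 (hξ := hξ) (γ t), F1_11 (hξ := hξ) (γ t)] at h
      simpa [hu, hV] using h
    · have h := hcomp (kf Γ ξ) hfc t
      rw [F2_0 (hΓ := hΓ) (htf := htf) (hskew := hskew) (hξ := hξ) (γ t),
        F2_1 (hΓ := hΓ) (htf := htf) (hskew := hskew) (hξ := hξ) (γ t)] at h
      simpa [hu, hV] using h
  set S : ℝ → ℝ := fun t =>
    (|w 0 * Γ (γ t) 0 0 0 + w 1 * Γ (γ t) 0 1 0| + |w 0 * Γ (γ t) 0 0 1 + w 1 * Γ (γ t) 0 1 1|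
        + |(-1:ℝ) * w 1|)
    + (|w 0 * Γ (γ t) 0 1 0 + w 1 * Γ (γ t) 1 1 0| + |w 0 * Γ (γ t) 0 1 1 + w 1 * Γ (γ t) 1 1 1|
        + |w 0|)
    + (|w 0 * rc Γ (γ t)| + |w 1 * rc Γ (γ t)|
        + |w 0 * (Γ (γ t) 0 0 0 + Γ (γ t) 0 1 1) + w 1 * (Γ (γ t) 0 1 0 + Γ (γ t) 1 1 1)|)
    with hS
  have hSc : ContinuousOn S (Set.Icc 0 1) := by
    have hg : ∀ j k l : Fin 2, Continuous fun t => Γ (γ t) j k l :=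
      fun j k l => ((hΓ j k l).continuous).comp hγc
    have hrg : Continuous fun t => rc Γ (γ t) := hrc'.continuous.comp hγc
    apply Continuous.continuousOn
    exact ((((continuous_const.mul (hg 0 0 0)).add (continuous_const.mul (hg 0 1 0))).abs.add
      (((continuous_const.mul (hg 0 0 1)).add (continuous_const.mul (hg 0 1 1))).abs)).add
      continuous_const.abs).add
      (((((continuous_const.mul (hg 0 1 0)).add (continuous_const.mul (hg 1 1 0))).abs.add
      (((continuous_const.mul (hg 0 1 1)).add (continuous_const.mul (hg 1 1 1))).abs)).add
      continuous_const.abs)) |>.add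
      (((continuous_const.mul hrg).abs.add ((continuous_const.mul hrg).abs)).add
      (((continuous_const.mul ((hg 0 0 0).add (hg 0 1 1))).add
        (continuous_const.mul ((hg 0 1 0).add (hg 1 1 1)))).abs))
  obtain ⟨K, hK⟩ := (isCompact_Icc : IsCompact (Set.Icc (0:ℝ) 1)).exists_bound_of_continuousOn hSc
  have hbound : ∀ t ∈ Set.Ico (0:ℝ) 1, ‖V t‖ ≤ K * ‖u t‖ + 0 := by
    intro t ht
    have htt : t ∈ Set.Icc (0:ℝ) 1 := ⟨ht.1, le_of_lt ht.2⟩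
    have hSK : S t ≤ K := le_trans (le_abs_self _) (by simpa [Real.norm_eq_abs] using hK t htt)
    have hSnn : (0:ℝ) ≤ S t := by rw [hS]; positivity
    have hKnn : (0:ℝ) ≤ K := le_trans hSnn hSK
    have hun : ∀ i : Fin 3, |u t i| ≤ ‖u t‖ := by
      intro i
      have := norm_le_pi_norm (u t) i
      simpa [Real.norm_eq_abs] using this
    rw [add_zero, pi_norm_le_iff_of_nonneg (by positivity)]
    intro i
    rw [Real.norm_eq_abs]
    have habs : ∀ a1 a2 a3 : ℝ, |a1| + |a2| + |a3| ≤ S t → |a1 * u t 0 + a2 * u t 1 + a3 * u t 2|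
        ≤ K * ‖u t‖ := by
      intro a1 a2 a3 hrow
      calc |a1 * u t 0 + a2 * u t 1 + a3 * u t 2| ≤ (|a1| + |a2| + |a3|) * ‖u t‖ :=
            absbound (hun 0) (hun 1) (hun 2)
      _ ≤ K * ‖u t‖ := mul_le_mul_of_nonneg_right (le_trans hrow hSK) (norm_nonneg _)
    fin_cases i
    · have e : V t 0 = (w 0 * Γ (γ t) 0 0 0 + w 1 * Γ (γ t) 0 1 0) * u t 0
          + (w 0 * Γ (γ t) 0 0 1 + w 1 * Γ (γ t) 0 1 1) * u t 1 + ((-1:ℝ) * w 1) * u t 2 := by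
        simp only [hu, hV, Matrix.cons_val_zero, Matrix.cons_val_one, Matrix.head_cons,
          Matrix.cons_val_two, Matrix.tail_cons]
        ring
      rw [show V t ⟨0, by omega⟩ = V t 0 from rfl, e]
      apply habs
      simp only [hS]
      have p1 : (0:ℝ) ≤ |w 0 * Γ (γ t) 0 1 0 + w 1 * Γ (γ t) 1 1 0| := abs_nonneg _
      have p2 : (0:ℝ) ≤ |w 0 * Γ (γ t) 0 1 1 + w 1 * Γ (γ t) 1 1 1| := abs_nonneg _
      have p3 : (0:ℝ) ≤ |w 0| := abs_nonneg _
      have p4 : (0:ℝ) ≤ |w 0 * rc Γ (γ t)| := abs_nonneg _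
      have p5 : (0:ℝ) ≤ |w 1 * rc Γ (γ t)| := abs_nonneg _
      have p6 : (0:ℝ) ≤ |w 0 * (Γ (γ t) 0 0 0 + Γ (γ t) 0 1 1)
          + w 1 * (Γ (γ t) 0 1 0 + Γ (γ t) 1 1 1)| := abs_nonneg _
      linarith
    · have e : V t 1 = (w 0 * Γ (γ t) 0 1 0 + w 1 * Γ (γ t) 1 1 0) * u t 0
          + (w 0 * Γ (γ t) 0 1 1 + w 1 * Γ (γ t) 1 1 1) * u t 1 + (w 0) * u t 2 := by
        simp only [hu, hV, Matrix.cons_val_zero, Matrix.cons_val_one, Matrix.head_cons,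
          Matrix.cons_val_two, Matrix.tail_cons]
        ring
      rw [show V t ⟨1, by omega⟩ = V t 1 from rfl, e]
      apply habs
      simp only [hS]
      have p1 : (0:ℝ) ≤ |w 0 * Γ (γ t) 0 0 0 + w 1 * Γ (γ t) 0 1 0| := abs_nonneg _
      have p2 : (0:ℝ) ≤ |w 0 * Γ (γ t) 0 0 1 + w 1 * Γ (γ t) 0 1 1| := abs_nonneg _
      have p3 : (0:ℝ) ≤ |(-1:ℝ) * w 1| := abs_nonneg _
      have p4 : (0:ℝ) ≤ |w 0 * rc Γ (γ t)| := abs_nonneg _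
      have p5 : (0:ℝ) ≤ |w 1 * rc Γ (γ t)| := abs_nonneg _
      have p6 : (0:ℝ) ≤ |w 0 * (Γ (γ t) 0 0 0 + Γ (γ t) 0 1 1)
          + w 1 * (Γ (γ t) 0 1 0 + Γ (γ t) 1 1 1)| := abs_nonneg _
      linarith
    · have e : V t 2 = (w 0 * rc Γ (γ t)) * u t 0 + (w 1 * rc Γ (γ t)) * u t 1
          + (w 0 * (Γ (γ t) 0 0 0 + Γ (γ t) 0 1 1) + w 1 * (Γ (γ t) 0 1 0 + Γ (γ t) 1 1 1)) * u t 2 := by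
        simp only [hu, hV, Matrix.cons_val_zero, Matrix.cons_val_one, Matrix.head_cons,
          Matrix.cons_val_two, Matrix.tail_cons]
        ring
      rw [show V t ⟨2, by omega⟩ = V t 2 from rfl, e]
      apply habs
      simp only [hS]
      have p1 : (0:ℝ) ≤ |w 0 * Γ (γ t) 0 0 0 + w 1 * Γ (γ t) 0 1 0| := abs_nonneg _
      have p2 : (0:ℝ) ≤ |w 0 * Γ (γ t) 0 0 1 + w 1 * Γ (γ t) 0 1 1| := abs_nonneg _
      have p3 : (0:ℝ) ≤ |(-1:ℝ) * w 1| := abs_nonneg _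
      have p4 : (0:ℝ) ≤ |w 0 * Γ (γ t) 0 1 0 + w 1 * Γ (γ t) 1 1 0| := abs_nonneg _
      have p5 : (0:ℝ) ≤ |w 0 * Γ (γ t) 0 1 1 + w 1 * Γ (γ t) 1 1 1| := abs_nonneg _
      have p6 : (0:ℝ) ≤ |w 0| := abs_nonneg _
      linarith
  have hu0 : u 0 = 0 := by
    funext i
    fin_cases i <;> simp [hu, hγ0, h0, h1, hf0]
  have hcont : ContinuousOn u (Set.Icc 0 1) := fun t _ => ((hud t).continuousAt).continuousWithinAt
  have hder : ∀ t ∈ Set.Ico (0:ℝ) 1, HasDerivWithinAt u (V t) (Set.Ici t) t :=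
    fun t _ => (hud t).hasDerivWithinAt
  have hn0 : ‖u 0‖ ≤ 0 := by rw [hu0]; simp
  have hG := norm_le_gronwallBound_of_norm_deriv_right_le hcont hder hn0 hbound
  have hval := hG 1 ⟨zero_le_one, le_refl 1⟩
  rw [gronwallBound_ε0] at hval
  have hu1 : u 1 = 0 := by
    apply norm_le_zero_iff.1
    simpa using hval
  fin_cases k
  · have := congrFun hu1 0
    simpa [hu, hγ1] using this
  · have := congrFun hu1 1
    simpa [hu, hγ1] using this


/-- For a torsion-free connection on a surface with everywhere-nonzero,
skew-symmetric Ricci tensor, the space of Killing 1-forms has dimension at most 1,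
and each Killing 1-form is either identically zero or nonzero at every point. -/
theorem killing_forms_dim_le_one
    (Γ : Surf → Fin 2 → Fin 2 → Fin 2 → ℝ)
    (hΓsmooth : ∀ j k l, ContDiff ℝ (⊤ : ℕ∞) fun x => Γ x j k l)
    (htf : ∀ x j k l, Γ x j k l = Γ x k j l)
    (hskew : ∀ x j k, ricci Γ x j k = -ricci Γ x k j)
    (hnz : ∀ x, ∃ j k, ricci Γ x j k ≠ 0) :
    (∀ ξ₁ ξ₂ : Surf → Fin 2 → ℝ, IsKillingForm Γ ξ₁ → IsKillingForm Γ ξ₂ →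
      ∃ a b : ℝ, (a ≠ 0 ∨ b ≠ 0) ∧ ∀ x k, a * ξ₁ x k + b * ξ₂ x k = 0) ∧
    (∀ ξ : Surf → Fin 2 → ℝ, IsKillingForm Γ ξ →
      (∀ x k, ξ x k = 0) ∨ (∀ x, ∃ k, ξ x k ≠ 0)) := by
  constructor
  · intro ξ₁ ξ₂ h₁ h₂
    set x₀ : Surf := fun _ => 0 with hx₀
    have hra : rc Γ x₀ ≠ 0 := rc_ne hskew hnz x₀
    have hq : N00 Γ x₀ + N11 Γ x₀ ≠ 0 := by
      rw [Ntrace (hΓ := hΓsmooth) (htf := htf) (hskew := hskew) (hξ := h₁) x₀]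
      exact mul_ne_zero (by norm_num) (mul_ne_zero (mul_ne_zero hra hra) hra)
    have hv0 := Nrow_0 (hΓ := hΓsmooth) (htf := htf) (hskew := hskew) (hξ := h₁) x₀
    have hv1 := Nrow_1 (hΓ := hΓsmooth) (htf := htf) (hskew := hskew) (hξ := h₁) x₀
    have hw0 := Nrow_0 (hΓ := hΓsmooth) (htf := htf) (hskew := hskew) (hξ := h₂) x₀
    have hw1 := Nrow_1 (hΓ := hΓsmooth) (htf := htf) (hskew := hskew) (hξ := h₂) x₀
    obtain ⟨a, b, hab, hc0, hc1⟩ := dep2 hq hv0 hv1 hw0 hw1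
    have hζ : IsKillingForm Γ (fun x k => a * ξ₁ x k + b * ξ₂ x k) := killing_comb h₁ h₂ a b
    have hvan := killing_vanish hΓsmooth htf hskew hnz hζ x₀ hc0 hc1
    exact ⟨a, b, hab, fun x k => hvan x k⟩
  · intro ξ hK
    by_cases hex : ∃ x, ξ x 0 = 0 ∧ ξ x 1 = 0
    · obtain ⟨x₀, hx0, hx1⟩ := hex
      exact Or.inl fun x k => killing_vanish hΓsmooth htf hskew hnz hK x₀ hx0 hx1 x k
    · right
      intro x
      by_contra hc
      push_neg at hc
      exact hex ⟨x, hc 0, hc 1⟩
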